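/- Let Ω = B(0,1) ⊂ ℝ³ be the unit ball, α ∈ (0,1), and f ∈ L^∞((-1,1);ℝ) with Λ⁻¹ ≤ f ≤ Λ but f ∉ C^{0,α}((-1,1);ℝ). Define ε(x) = f(x₁) (as a scalar coefficient), J_e = (-iω, 0, 0), E(x) = (f(x₁)⁻¹, 0, 0), H ≡ 0. Then (E,H) ∈ H(curl,Ω)² is a weak solution of curl H = iωεE + J_e and curl E = -iωH in Ω, and E is not α-Hölder continuous on Ω. -/

import Mathlib

open MeasureTheory Metric Set NNReal
noncomputable section

/-- Three dimensional Euclidean space. -/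
abbrev V3 := EuclideanSpace ℝ (Fin 3)
/-- Complex 3-vectors. -/
abbrev C3 := Fin 3 → ℂ

/-- Partial derivative of a complex-valued function in the `i`-th coordinate direction. -/
def pdc (i : Fin 3) (f : V3 → ℂ) (x : V3) : ℂ := fderiv ℝ f x (EuclideanSpace.single i 1)

/-- Partial derivative of a real-valued function. -/
def pdr (i : Fin 3) (f : V3 → ℝ) (x : V3) : ℝ := fderiv ℝ f x (EuclideanSpace.single i 1)

/-- Curl of a complex vector field. -/
def curl3 (F : V3 → C3) (x : V3) : C3 :=
  ![pdc 1 (fun y => F y 2) x - pdc 2 (fun y => F y 1) x,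
    pdc 2 (fun y => F y 0) x - pdc 0 (fun y => F y 2) x,
    pdc 0 (fun y => F y 1) x - pdc 1 (fun y => F y 0) x]

/-- Curl of a real vector field. -/
def curl3r (F : V3 → Fin 3 → ℝ) (x : V3) : Fin 3 → ℝ :=
  ![pdr 1 (fun y => F y 2) x - pdr 2 (fun y => F y 1) x,
    pdr 2 (fun y => F y 0) x - pdr 0 (fun y => F y 2) x,
    pdr 0 (fun y => F y 1) x - pdr 1 (fun y => F y 0) x]

/-- Divergence of a complex vector field. -/
def div3 (F : V3 → C3) (x : V3) : ℂ := pdc 0 (fun y => F y 0) x + pdc 1 (fun y => F y 1) x + pdc 2 (fun y => F y 2) x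

/-- Bilinear (unconjugated) dot product of complex 3-vectors. -/
def dot3 (a b : C3) : ℂ := ∑ i, a i * b i

def dot3r (a b : Fin 3 → ℝ) : ℝ := ∑ i, a i * b i

/-- Smooth compactly supported complex vector test fields supported in `Ω`. -/
def IsTestV (Ω : Set V3) (φ : V3 → C3) : Prop :=
  ContDiff ℝ (⊤ : ℕ∞) φ ∧ HasCompactSupport φ ∧ tsupport φ ⊆ Ω

/-- Smooth compactly supported real vector test fields supported in `Ω`. -/
def IsTestVR (Ω : Set V3) (φ : V3 → Fin 3 → ℝ) : Prop :=
  ContDiff ℝ (⊤ : ℕ∞) φ ∧ HasCompactSupport φ ∧ tsupport φ ⊆ Ω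

/-- Smooth compactly supported scalar test functions supported in `Ω`. -/
def IsTestS (Ω : Set V3) (φ : V3 → ℂ) : Prop :=
  ContDiff ℝ (⊤ : ℕ∞) φ ∧ HasCompactSupport φ ∧ tsupport φ ⊆ Ω

/-- The set of values whose supremum is the Campanato seminorm `[u]_{2,λ;Ω}`. -/
def campSet (Ω : Set V3) (lam : ℝ) (u : V3 → ℂ) : Set ℝ :=
  {r | ∃ x ∈ Ω, ∃ ρ : ℝ, 0 < ρ ∧ ρ < Metric.diam Ω ∧
    r = (ρ ^ (-lam) * ∫ y in Ω ∩ ball x ρ, ‖u y - ⨍ z in Ω ∩ ball x ρ, u z‖ ^ 2) ^ (1/2 : ℝ)}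

/-- The Campanato seminorm `[u]_{2,λ;Ω}`. -/
def campSemi (Ω : Set V3) (lam : ℝ) (u : V3 → ℂ) : ℝ := sSup (campSet Ω lam u)

/-- The `L²(Ω)` norm. -/
def l2norm (Ω : Set V3) (u : V3 → ℂ) : ℝ := (∫ x in Ω, ‖u x‖ ^ 2) ^ (1/2 : ℝ)

/-- The Campanato space `L^{2,λ}(Ω)` norm `‖u‖_{L²} + [u]_{2,λ;Ω}`. -/
def l2lamNorm (Ω : Set V3) (lam : ℝ) (u : V3 → ℂ) : ℝ := l2norm Ω u + campSemi Ω lam u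

/-- The Hölder norm `‖f‖_{C^{0,α}(s)}` (sup norm plus Hölder seminorm). -/
def holderNorm {E : Type*} [NormedAddCommGroup E] (α : ℝ) (s : Set V3) (f : V3 → E) : ℝ :=
  sSup {r | ∃ x ∈ s, r = ‖f x‖} +
  sSup {r | ∃ x ∈ s, ∃ y ∈ s, x ≠ y ∧ r = ‖f x - f y‖ / dist x y ^ α}

/-- Membership in the Hölder space `C^{0,α}(s)`. -/
def HolderMem {E : Type*} [NormedAddCommGroup E] (α : ℝ) (s : Set V3) (f : V3 → E) : Prop :=
  BddAbove {r | ∃ x ∈ s, r = ‖f x‖} ∧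
  BddAbove {r | ∃ x ∈ s, ∃ y ∈ s, x ≠ y ∧ r = ‖f x - f y‖ / dist x y ^ α}

/-- `g` is the distributional gradient of `u` on `Ω`. -/
def HasWeakGrad (Ω : Set V3) (u : V3 → ℂ) (g : V3 → C3) : Prop :=
  ∀ φ : V3 → ℂ, IsTestS Ω φ → ∀ i, ∫ x in Ω, u x * pdc i φ x = -∫ x in Ω, g x i * φ x

/-- `G` is the distributional curl of `F` on `Ω`. -/
def HasWeakCurl (Ω : Set V3) (F G : V3 → C3) : Prop :=
  ∀ φ : V3 → C3, IsTestV Ω φ → ∫ x in Ω, dot3 (F x) (curl3 φ x) = ∫ x in Ω, dot3 (G x) (φ x)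

/-- `d` is the distributional divergence of `F` on `Ω`. -/
def HasWeakDiv (Ω : Set V3) (F : V3 → C3) (d : V3 → ℂ) : Prop :=
  ∀ φ : V3 → ℂ, IsTestS Ω φ → ∫ x in Ω, dot3 (F x) (fun i => pdc i φ x) = -∫ x in Ω, d x * φ x

/-- A bounded Lipschitz domain in `ℝ³`: open, nonempty, bounded, and near every boundary point,
after a rigid rotation, `Ω` is the region above the graph of a Lipschitz function. -/
def IsLipschitzDomain (Ω : Set V3) : Prop :=
  IsOpen Ω ∧ Ω.Nonempty ∧ Bornology.IsBounded Ω ∧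
  ∀ x ∈ frontier Ω, ∃ U : Set V3, x ∈ U ∧ IsOpen U ∧
    ∃ (e : V3 ≃ₗᵢ[ℝ] V3) (f : EuclideanSpace ℝ (Fin 2) → ℝ) (L : ℝ≥0),
      LipschitzWith L f ∧
      ∀ y ∈ U, (y ∈ Ω ↔
        f ((WithLp.equiv 2 (Fin 2 → ℝ)).symm ![e y 0, e y 1]) < e y 2)

/-- A bounded `C^{1,1}` domain in `ℝ³`: as above with the graph function of class `C^{1,1}`. -/
def IsC11Domain (Ω : Set V3) : Prop :=
  IsOpen Ω ∧ Ω.Nonempty ∧ Bornology.IsBounded Ω ∧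
  ∀ x ∈ frontier Ω, ∃ U : Set V3, x ∈ U ∧ IsOpen U ∧
    ∃ (e : V3 ≃ₗᵢ[ℝ] V3) (f : EuclideanSpace ℝ (Fin 2) → ℝ) (L : ℝ≥0),
      ContDiff ℝ 1 f ∧ LipschitzWith L (fderiv ℝ f) ∧
      ∀ y ∈ U, (y ∈ Ω ↔
        f ((WithLp.equiv 2 (Fin 2 → ℝ)).symm ![e y 0, e y 1]) < e y 2)

/-- The real `12×12` block matrix built from the complex material parameters `ε, ξ, ζ, μ`,
indexed by `Fin 4 × Fin 3` (block index times in-block index). -/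
def blockA (ε ξ ζ μ : Matrix (Fin 3) (Fin 3) ℂ) :
    Fin 4 × Fin 3 → Fin 4 × Fin 3 → ℝ := fun p q =>
  (![![ε.map Complex.re, -ε.map Complex.im, ξ.map Complex.re, -ξ.map Complex.im],
     ![ε.map Complex.im,  ε.map Complex.re, ξ.map Complex.im,  ξ.map Complex.re],
     ![ζ.map Complex.re, -ζ.map Complex.im, μ.map Complex.re, -μ.map Complex.im],
     ![ζ.map Complex.im,  ζ.map Complex.re, μ.map Complex.im,  μ.map Complex.re]]
    p.1 q.1) p.2 q.2
lemma coord_abs_le_norm (x : V3) (i : Fin 3) : |x i| ≤ ‖x‖ := by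
  rw [EuclideanSpace.norm_eq]
  rw [← Real.sqrt_sq_eq_abs]
  apply Real.sqrt_le_sqrt
  calc x i ^ 2 = ‖x i‖ ^ 2 := by rw [Real.norm_eq_abs, sq_abs]
    _ ≤ ∑ j, ‖x j‖ ^ 2 := Finset.single_le_sum (f := fun j => ‖x j‖^2)
        (fun j _ => by positivity) (Finset.mem_univ i)

lemma key (g : ℝ → ℂ) (hg : Measurable g) (ψ : V3 → ℂ) (hψ : ContDiff ℝ (⊤ : ℕ∞) ψ)
    (hsupp : HasCompactSupport ψ) (i : Fin 3) (hi : i ≠ 0)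
    (M : ℝ) (hM : ∀ x ∈ tsupport ψ, ‖g (x 0)‖ ≤ M) :
    Integrable (fun x => g (x 0) * pdc i ψ x) ∧ (∫ x, g (x 0) * pdc i ψ x) = 0 := by
  classical
  set e : V3 := EuclideanSpace.single i (1:ℝ) with he
  have he0 : e 0 = 0 := by
    simp [he, EuclideanSpace.single_apply, hi.symm]
  have hcoord : ∀ (x : V3) (t : ℝ), (x + t • e) 0 = x 0 := by
    intro x t
    simp [PiLp.add_apply, PiLp.smul_apply, he0]
  have hne : ‖e‖ = 1 := by simp [he, EuclideanSpace.norm_single]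
  set K := tsupport ψ with hK
  have hKc : IsCompact K := hsupp
  set K' := cthickening 1 K with hK'
  have hK'c : IsCompact K' := hKc.cthickening
  have hgm : Measurable fun x : V3 => g (x 0) := hg.comp (by fun_prop)
  have hfd : Continuous (fderiv ℝ ψ) := hψ.continuous_fderiv (by simp)
  have hfds : HasCompactSupport (fderiv ℝ ψ) := hsupp.fderiv (𝕜 := ℝ)
  obtain ⟨C, hC⟩ := hfds.exists_bound_of_continuous hfd
  have hC0 : 0 ≤ C := le_trans (norm_nonneg _) (hC 0)
  obtain ⟨Cψ, hCψ⟩ := hsupp.exists_bound_of_continuous hψ.continuous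
  have hCψ0 : 0 ≤ Cψ := le_trans (norm_nonneg _) (hCψ 0)
  set M' := max M 0 with hM'
  have hM'0 : 0 ≤ M' := le_max_right _ _
  have hMK : ∀ x ∈ K, ‖g (x 0)‖ ≤ M' := fun x hx => (hM x hx).trans (le_max_left _ _)
  set F : ℝ → V3 → ℂ := fun t x => g (x 0) * ψ (x + t • e) with hF
  set F' : ℝ → V3 → ℂ := fun t x => g (x 0) * fderiv ℝ ψ (x + t • e) e with hF'
  have hmeasF : ∀ t : ℝ, AEStronglyMeasurable (F t) volume := by
    intro t
    exact (hgm.aestronglyMeasurable.mul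
      ((hψ.continuous.comp (continuous_id.add continuous_const)).aestronglyMeasurable))
  have hKmeas : MeasurableSet K := (isClosed_tsupport ψ).measurableSet
  have hK'meas : MeasurableSet K' := isClosed_cthickening.measurableSet
  have hbound_int : Integrable (K'.indicator fun _ => M' * C) volume := by
    rw [integrable_indicator_iff hK'meas]
    exact integrableOn_const hK'c.measure_lt_top.ne
  have hFint : Integrable (F 0) volume := by
    apply Integrable.mono' (g := K.indicator fun _ => M' * Cψ)
    · rw [integrable_indicator_iff hKmeas]
      exact integrableOn_const hKc.measure_lt_top.ne
    · exact hmeasF 0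
    · filter_upwards with x
      by_cases hx : x + (0:ℝ) • e ∈ K
      · have hx' : x ∈ K := by simpa using hx
        rw [Set.indicator_of_mem hx', hF]
        simp only [norm_mul]
        exact mul_le_mul (hMK x hx') (hCψ _) (norm_nonneg _) hM'0
      · have : ψ (x + (0:ℝ) • e) = 0 := image_eq_zero_of_notMem_tsupport hx
        rw [hF]
        simp only [this, mul_zero, norm_zero]
        exact Set.indicator_nonneg (fun _ _ => mul_nonneg hM'0 hCψ0) x
  have hF'meas : AEStronglyMeasurable (F' 0) volume := by
    have : Continuous fun x : V3 => fderiv ℝ ψ (x + (0:ℝ) • e) e :=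
      ((ContinuousLinearMap.apply ℝ ℂ e).continuous).comp
        (hfd.comp (continuous_id.add continuous_const))
    exact hgm.aestronglyMeasurable.mul this.aestronglyMeasurable
  have h_bound : ∀ᵐ x ∂(volume : Measure V3), ∀ t ∈ ball (0:ℝ) 1,
      ‖F' t x‖ ≤ K'.indicator (fun _ => M' * C) x := by
    filter_upwards with x t ht
    by_cases hx : x + t • e ∈ K
    · have hxK' : x ∈ K' := by
        apply mem_cthickening_of_dist_le x (x + t • e) 1 K hx
        rw [dist_eq_norm, show x - (x + t • e) = -(t • e) by abel, norm_neg, norm_smul, hne,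
          mul_one, Real.norm_eq_abs]
        exact le_of_lt (by simpa [Real.dist_eq] using ht)
      rw [Set.indicator_of_mem hxK', hF']
      simp only [norm_mul]
      have h1 : ‖g (x 0)‖ ≤ M' := by
        have := hMK _ hx; rwa [hcoord] at this
      have h2 : ‖fderiv ℝ ψ (x + t • e) e‖ ≤ C := by
        calc ‖fderiv ℝ ψ (x + t • e) e‖ ≤ ‖fderiv ℝ ψ (x + t • e)‖ * ‖e‖ :=
          (fderiv ℝ ψ (x + t • e)).le_opNorm e
        _ ≤ C := by rw [hne, mul_one]; exact hC _
      exact mul_le_mul h1 h2 (norm_nonneg _) hM'0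
    · have : fderiv ℝ ψ (x + t • e) = 0 := by
        by_contra h
        exact hx (support_fderiv_subset ℝ (f := ψ) h)
      rw [hF']
      simp only [this, ContinuousLinearMap.zero_apply, mul_zero, norm_zero]
      exact Set.indicator_nonneg (fun _ _ => mul_nonneg hM'0 hC0) x
  have h_diff : ∀ᵐ x ∂(volume : Measure V3), ∀ t ∈ ball (0:ℝ) 1,
      HasDerivAt (F · x) (F' t x) t := by
    filter_upwards with x t _
    have hd1 : HasDerivAt (fun t : ℝ => x + t • e) e t := by
      simpa using ((hasDerivAt_id t).smul_const e).const_add x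
    have hd2 : HasDerivAt (fun t : ℝ => ψ (x + t • e)) (fderiv ℝ ψ (x + t • e) e) t :=
      (((hψ.differentiable (by simp)) (x + t • e)).hasFDerivAt).comp_hasDerivAt t hd1
    exact hd2.const_mul (g (x 0))
  obtain ⟨hint, hderiv⟩ := hasDerivAt_integral_of_dominated_loc_of_deriv_le
    (F := F) (F' := F') (x₀ := (0:ℝ)) (s := ball (0:ℝ) 1) (ball_mem_nhds _ one_pos)
    (Filter.Eventually.of_forall hmeasF) hFint hF'meas h_bound hbound_int h_diff
  have hconst : ∀ t : ℝ, (∫ x, F t x) = ∫ x, F 0 x := by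
    intro t
    have := integral_add_right_eq_self (μ := (volume : Measure V3))
      (fun x : V3 => g (x 0) * ψ x) (t • e)
    calc (∫ x, F t x) = ∫ x, g ((x + t • e) 0) * ψ (x + t • e) := by
          congr 1; funext x; rw [hF, hcoord]
      _ = ∫ x, g (x 0) * ψ x := this
      _ = ∫ x, F 0 x := by congr 1; funext x; rw [hF]; simp
  have hzero : (∫ x, F' 0 x) = 0 := by
    have : (fun t : ℝ => ∫ x, F t x) = fun _ => ∫ x, F 0 x := funext hconst
    have h2 : HasDerivAt (fun t : ℝ => ∫ x, F t x) 0 0 := by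
      rw [this]; exact hasDerivAt_const _ _
    exact hderiv.unique h2
  have heq : (fun x => g (x 0) * pdc i ψ x) = F' 0 := by
    funext x
    rw [hF', pdc]
    simp [he]
  rw [heq]
  exact ⟨hint, hzero⟩

/-- Minimality counterexample: with `ε(x) = f(x₁)` merely bounded measurable
(not `α`-Hölder), `E(x) = (f(x₁)⁻¹,0,0)`, `H ≡ 0`, `J_e = (-iω,0,0)`, the pair `(E,H)` lies in
`H(curl, B(0,1))²` and weakly solves `curl H = iωεE + J_e`, `curl E = -iωH`, yet `E` is not
`α`-Hölder continuous on `B(0,1)`. -/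
theorem stmt0 (Λ α : ℝ) (hΛ : 0 < Λ) (hα : α ∈ Set.Ioo (0:ℝ) 1) (ω : ℂ) (hω : ω ≠ 0)
    (f : ℝ → ℝ) (hf : Measurable f)
    (hbd : ∀ t ∈ Set.Ioo (-1:ℝ) 1, Λ⁻¹ ≤ f t ∧ f t ≤ Λ)
    (hnh : ¬ ∃ C : ℝ, ∀ s ∈ Set.Ioo (-1:ℝ) 1, ∀ t ∈ Set.Ioo (-1:ℝ) 1,
      |f s - f t| ≤ C * |s - t| ^ α)
    (E H : V3 → C3) (Je : C3)
    (hE : E = fun x i => if i = 0 then (((f (x 0) : ℝ) : ℂ))⁻¹ else 0)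
    (hH : H = fun _ _ => 0)
    (hJe : Je = ![-(Complex.I * ω), 0, 0]) :
    -- `E, H ∈ H(curl, Ω)`: the fields and their distributional curls are square integrable
    MemLp E 2 (volume.restrict (ball (0:V3) 1)) ∧
    MemLp H 2 (volume.restrict (ball (0:V3) 1)) ∧
    MemLp (fun x => fun i => Complex.I * ω * ((f (x 0) : ℝ) : ℂ) * E x i + Je i) 2
      (volume.restrict (ball (0:V3) 1)) ∧
    -- weak form of `curl H = iω ε E + J_e` with `ε(x) = f(x₁)`
    HasWeakCurl (ball (0:V3) 1) H
      (fun x => fun i => Complex.I * ω * ((f (x 0) : ℝ) : ℂ) * E x i + Je i) ∧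
    -- weak form of `curl E = -iω H`
    HasWeakCurl (ball (0:V3) 1) E (fun x => fun i => -(Complex.I * ω) * H x i) ∧
    -- `E` is not `α`-Hölder continuous on `Ω`
    ¬ ∃ C : ℝ, ∀ x ∈ ball (0:V3) 1, ∀ y ∈ ball (0:V3) 1,
      ‖E x - E y‖ ≤ C * dist x y ^ α := by
  have hmem : ∀ x : V3, ‖x‖ < 1 → Λ⁻¹ ≤ f (x 0) ∧ f (x 0) ≤ Λ := by
    intro x hx
    exact hbd _ (Set.mem_Ioo.2 (abs_lt.1 ((coord_abs_le_norm x 0).trans_lt hx)))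
  have hpos : ∀ x : V3, ‖x‖ < 1 → 0 < f (x 0) := fun x hx =>
    lt_of_lt_of_le (inv_pos.2 hΛ) (hmem x hx).1
  have hinvle : ∀ x : V3, ‖x‖ < 1 → ‖(((f (x 0) : ℝ) : ℂ))⁻¹‖ ≤ Λ := by
    intro x hx
    rw [norm_inv, Complex.norm_real, Real.norm_eq_abs, abs_of_pos (hpos x hx)]
    calc (f (x 0))⁻¹ ≤ (Λ⁻¹)⁻¹ := inv_anti₀ (inv_pos.2 hΛ) (hmem x hx).1
      _ = Λ := inv_inv Λ
  haveI : IsFiniteMeasure (volume.restrict (ball (0:V3) 1)) :=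
    ⟨by rw [Measure.restrict_apply_univ]; exact measure_ball_lt_top⟩
  have hEm : Measurable E := by
    rw [hE]
    apply measurable_pi_lambda
    intro i
    by_cases h : i = 0
    · simp only [h, if_pos]
      exact (Complex.measurable_ofReal.comp (hf.comp (by fun_prop))).inv
    · simp only [h, if_neg, if_false]
      exact measurable_const
  have hE2 : MemLp E 2 (volume.restrict (ball (0:V3) 1)) := by
    apply MemLp.of_bound hEm.aestronglyMeasurable Λ
    filter_upwards [ae_restrict_mem measurableSet_ball] with x hx
    have hx1 : ‖x‖ < 1 := mem_ball_zero_iff.1 hx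
    rw [hE]
    apply (pi_norm_le_iff_of_nonneg hΛ.le).2
    intro i
    by_cases h : i = 0
    · simpa only [h, if_pos] using hinvle x hx1
    · simp only [h, if_false]
      simpa using hΛ.le
  have hGzero : ∀ x : V3, ‖x‖ < 1 →
      (fun i => Complex.I * ω * ((f (x 0) : ℝ) : ℂ) * E x i + Je i) = (0 : C3) := by
    intro x hx
    have hfx : ((f (x 0) : ℝ) : ℂ) ≠ 0 := Complex.ofReal_ne_zero.2 (hpos x hx).ne'
    funext i
    fin_cases i
    · simp [hE, hJe, mul_assoc, mul_inv_cancel₀ hfx]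
    · simp [hE, hJe]
    · simp [hE, hJe]
  refine ⟨hE2, ?_, ?_, ?_, ?_, ?_⟩
  · rw [hH]; exact memLp_const 0
  · apply MemLp.ae_eq (f := fun _ : V3 => (0 : C3)) ?_ (memLp_const 0)
    filter_upwards [ae_restrict_mem measurableSet_ball] with x hx
    exact (hGzero x (mem_ball_zero_iff.1 hx)).symm
  · -- HasWeakCurl for H
    intro φ hφ
    have l : (∫ x in ball (0:V3) 1, dot3 (H x) (curl3 φ x)) = 0 := by
      rw [hH]; simp [dot3]
    rw [l]
    rw [setIntegral_congr_fun measurableSet_ball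
      (g := fun _ : V3 => (0:ℂ)) (fun x hx => by
        have h0 : ∀ j, Complex.I * ω * ((f (x 0) : ℝ) : ℂ) * E x j + Je j = 0 :=
          fun j => congrFun (hGzero x (mem_ball_zero_iff.1 hx)) j
        simp [dot3, h0])]
    simp
  · -- HasWeakCurl for E
    intro φ hφ
    obtain ⟨hsm, hcs, hsub⟩ := hφ
    set g : ℝ → ℂ := fun t => ((t : ℝ) : ℂ) with hgdef
    have hgm : Measurable fun t : ℝ => (((f t : ℝ) : ℂ))⁻¹ :=
      (Complex.measurable_ofReal.comp hf).inv
    have hψsm : ∀ j : Fin 3, ContDiff ℝ (⊤ : ℕ∞) (fun y => φ y j) := fun j =>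
      (ContinuousLinearMap.proj j : C3 →L[ℝ] ℂ).contDiff.comp hsm
    have hψcs : ∀ j : Fin 3, HasCompactSupport (fun y => φ y j) := fun j =>
      hcs.comp_left (g := fun v : C3 => v j) rfl
    have hψsub : ∀ j : Fin 3, tsupport (fun y => φ y j) ⊆ ball (0:V3) 1 := fun j =>
      (closure_mono (Function.support_comp_subset (g := fun v : C3 => v j) rfl φ)).trans hsub
    have hMj : ∀ j : Fin 3, ∀ x ∈ tsupport (fun y => φ y j),
        ‖(((f (x 0) : ℝ) : ℂ))⁻¹‖ ≤ Λ := fun j x hx =>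
      hinvle x (mem_ball_zero_iff.1 (hψsub j hx))
    obtain ⟨hint2, hz2⟩ := key _ hgm _ (hψsm 2) (hψcs 2) 1 (by decide) Λ (hMj 2)
    obtain ⟨hint1, hz1⟩ := key _ hgm _ (hψsm 1) (hψcs 1) 2 (by decide) Λ (hMj 1)
    have hfun : ∀ x : V3, dot3 (E x) (curl3 φ x) =
        (((f (x 0) : ℝ) : ℂ))⁻¹ * pdc 1 (fun y => φ y 2) x -
        (((f (x 0) : ℝ) : ℂ))⁻¹ * pdc 2 (fun y => φ y 1) x := by
      intro x
      rw [hE]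
      simp [dot3, curl3, Fin.sum_univ_three]
      ring
    have hcompl : ∀ x : V3, x ∉ ball (0:V3) 1 →
        (((f (x 0) : ℝ) : ℂ))⁻¹ * pdc 1 (fun y => φ y 2) x -
        (((f (x 0) : ℝ) : ℂ))⁻¹ * pdc 2 (fun y => φ y 1) x = 0 := by
      intro x hx
      have h2 : fderiv ℝ (fun y => φ y 2) x = 0 := by
        by_contra h
        exact hx (hψsub 2 (support_fderiv_subset ℝ h))
      have h1 : fderiv ℝ (fun y => φ y 1) x = 0 := by
        by_contra h
        exact hx (hψsub 1 (support_fderiv_subset ℝ h))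
      simp [pdc, h1, h2]
    calc (∫ x in ball (0:V3) 1, dot3 (E x) (curl3 φ x))
        = ∫ x in ball (0:V3) 1, ((((f (x 0) : ℝ) : ℂ))⁻¹ * pdc 1 (fun y => φ y 2) x -
            (((f (x 0) : ℝ) : ℂ))⁻¹ * pdc 2 (fun y => φ y 1) x) := by
          exact setIntegral_congr_fun measurableSet_ball (fun x _ => hfun x)
      _ = ∫ x : V3, ((((f (x 0) : ℝ) : ℂ))⁻¹ * pdc 1 (fun y => φ y 2) x -
            (((f (x 0) : ℝ) : ℂ))⁻¹ * pdc 2 (fun y => φ y 1) x) :=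
          setIntegral_eq_integral_of_forall_compl_eq_zero hcompl
      _ = 0 - 0 := by rw [integral_sub hint2 hint1, hz1, hz2]
      _ = ∫ x in ball (0:V3) 1, dot3 ((fun i => -(Complex.I * ω) * H x i)) (φ x) := by
          rw [hH]; simp [dot3]
  · -- not Hölder
    rintro ⟨C, hC⟩
    apply hnh
    refine ⟨Λ ^ 2 * C, fun s hs t ht => ?_⟩
    set x : V3 := EuclideanSpace.single 0 s with hx
    set y : V3 := EuclideanSpace.single 0 t with hy
    have hxb : x ∈ ball (0:V3) 1 := by
      rw [mem_ball_zero_iff, hx, EuclideanSpace.norm_single, Real.norm_eq_abs]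
      exact abs_lt.2 ⟨hs.1, hs.2⟩
    have hyb : y ∈ ball (0:V3) 1 := by
      rw [mem_ball_zero_iff, hy, EuclideanSpace.norm_single, Real.norm_eq_abs]
      exact abs_lt.2 ⟨ht.1, ht.2⟩
    have hdist : dist x y = |s - t| := by
      rw [hx, hy, EuclideanSpace.dist_single_same, Real.dist_eq]
    have hx0 : x 0 = s := by simp [hx, EuclideanSpace.single_apply]
    have hy0 : y 0 = t := by simp [hy, EuclideanSpace.single_apply]
    have hcomp : (E x - E y) 0 = (((f s)⁻¹ - (f t)⁻¹ : ℝ) : ℂ) := by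
      rw [hE]
      simp [hx0, hy0]
    have hkey : |(f s)⁻¹ - (f t)⁻¹| ≤ C * |s - t| ^ α := by
      calc |(f s)⁻¹ - (f t)⁻¹| = ‖(E x - E y) 0‖ := by
            rw [hcomp, Complex.norm_real, Real.norm_eq_abs]
        _ ≤ ‖E x - E y‖ := norm_le_pi_norm _ 0
        _ ≤ C * dist x y ^ α := hC x hxb y hyb
        _ = C * |s - t| ^ α := by rw [hdist]
    have has : 0 < f s := lt_of_lt_of_le (inv_pos.2 hΛ) (hbd s hs).1
    have hat : 0 < f t := lt_of_lt_of_le (inv_pos.2 hΛ) (hbd t ht).1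
    have habs : |f s - f t| = f s * f t * |(f s)⁻¹ - (f t)⁻¹| := by
      have hrw : (f s)⁻¹ - (f t)⁻¹ = (f t - f s) / (f s * f t) := by
        field_simp
      rw [hrw, abs_div, abs_of_pos (mul_pos has hat), mul_div_cancel₀ _
        (mul_pos has hat).ne', abs_sub_comm]
    have hub : f s * f t ≤ Λ * Λ :=
      mul_le_mul (hbd s hs).2 (hbd t ht).2 hat.le hΛ.le
    calc |f s - f t| = f s * f t * |(f s)⁻¹ - (f t)⁻¹| := habs
      _ ≤ (Λ * Λ) * (C * |s - t| ^ α) :=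
          mul_le_mul hub hkey (abs_nonneg _) (by positivity)
      _ = Λ ^ 2 * C * |s - t| ^ α := by ring
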